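/- arXiv:0901.2372 — 2 statements merged into one kernel-verified Lean document; each statement's English description precedes it below -/
import Mathlib

section
/- (Full 3×3 lemma) In a weakly exact category satisfying additionally (4a) the pullback of a deflation along a deflation exists and is a deflation, and (4b) given a commutative diagram where φ₂ : A₂ → A₃ and φ₂' : B₂ → A₃ are deflations with kernels φ₁ : A₁ → A₂ and φ₁' : B₁ → B₂ and vertical morphisms f₁, f₂ compatible with the diagram, f₁ is a deflation if and only if f₂ is a deflation: given a commutative 3×3 diagram with rows A₁ → A₂ → A₃, B₁ →^{φ₁'} B₂ →^{φ₂'} B₃, C₁ → C₂ → C₃, in which all three columns and the first and third rows are short exact and φ₂'∘φ₁' = 0, the middle row B₁ → B₂ → B₃ is short exact. -/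
open CategoryTheory CategoryTheory.Limits

universe v u

section Defs

variable {C : Type u} [Category.{v} C] [HasZeroMorphisms C]

/-- `i : K ⟶ A` is a kernel of `p : A ⟶ B`. -/
def IsKernelOf {K A B : C} (i : K ⟶ A) (p : A ⟶ B) : Prop :=
  i ≫ p = 0 ∧ ∀ ⦃W : C⦄ (g : W ⟶ A), g ≫ p = 0 → ∃! h : W ⟶ K, h ≫ i = g

/-- `q : B ⟶ Q` is a cokernel of `i : A ⟶ B`. -/
def IsCokernelOf {A B Q : C} (q : B ⟶ Q) (i : A ⟶ B) : Prop :=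
  i ≫ q = 0 ∧ ∀ ⦃W : C⦄ (g : B ⟶ W), i ≫ g = 0 → ∃! h : Q ⟶ W, q ≫ h = g

variable (D : MorphismProperty C)

/-- `A ⟶ B ⟶ Q` is a short exact sequence for the class of deflations `D`:
`p` is a deflation and `i` is a kernel of `p`. -/
def IsShortExact {A B Q : C} (i : A ⟶ B) (p : B ⟶ Q) : Prop :=
  D p ∧ IsKernelOf i p

/-- An inflation is a kernel of some deflation. -/
def IsInflation {A B : C} (i : A ⟶ B) : Prop :=
  ∃ (Q : C) (p : B ⟶ Q), D p ∧ IsKernelOf i p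

/-- The axioms for a weakly exact category: `D` is the class of deflations.
Axiom (0): isomorphisms and morphisms to a zero object are deflations;
Axiom (1): a deflation has a kernel and is a cokernel of its kernel;
Axiom (2): deflations are closed under composition;
Axiom (3): if `g ∘ f` and `f` are deflations then so is `g`;
Axiom (4): the 3×3 lemma. -/
structure IsWeaklyExact : Prop where
  defl_of_isIso : ∀ ⦃X Y : C⦄ (f : X ⟶ Y), IsIso f → D f
  defl_to_zero : ∀ ⦃X Y : C⦄ (f : X ⟶ Y), IsZero Y → D f
  defl_kernel : ∀ ⦃X Y : C⦄ (p : X ⟶ Y), D p →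
    ∃ (K : C) (i : K ⟶ X), IsKernelOf i p ∧ IsCokernelOf p i
  defl_comp : ∀ ⦃X Y Z : C⦄ (f : X ⟶ Y) (g : Y ⟶ Z), D f → D g → D (f ≫ g)
  defl_cancel : ∀ ⦃X Y Z : C⦄ (f : X ⟶ Y) (g : Y ⟶ Z), D (f ≫ g) → D f → D g
  three_by_three : ∀ ⦃A₁ A₂ A₃ B₁ B₂ B₃ C₁ C₂ C₃ : C⦄
    (a₁ : A₁ ⟶ A₂) (a₂ : A₂ ⟶ A₃) (b₁ : B₁ ⟶ B₂) (b₂ : B₂ ⟶ B₃)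
    (c₁ : C₁ ⟶ C₂) (c₂ : C₂ ⟶ C₃)
    (f₁ : A₁ ⟶ B₁) (f₂ : A₂ ⟶ B₂) (f₃ : A₃ ⟶ B₃)
    (g₁ : B₁ ⟶ C₁) (g₂ : B₂ ⟶ C₂) (g₃ : B₃ ⟶ C₃),
    a₁ ≫ f₂ = f₁ ≫ b₁ → a₂ ≫ f₃ = f₂ ≫ b₂ →
    b₁ ≫ g₂ = g₁ ≫ c₁ → b₂ ≫ g₃ = g₂ ≫ c₂ →
    IsShortExact D f₁ g₁ → IsShortExact D f₂ g₂ → IsShortExact D f₃ g₃ →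
    IsShortExact D b₁ b₂ → IsShortExact D c₁ c₂ →
    IsShortExact D a₁ a₂

end Defs


section Helpers

variable {C : Type u} [Category.{v} C] [HasZeroMorphisms C]

/-- Kernels are monomorphisms. -/
theorem IsKernelOf.mono {K A B : C} {i : K ⟶ A} {p : A ⟶ B} (h : IsKernelOf i p)
    {W : C} {z₁ z₂ : W ⟶ K} (e : z₁ ≫ i = z₂ ≫ i) : z₁ = z₂ := by
  obtain ⟨w, hw⟩ := h
  have h0 : (z₁ ≫ i) ≫ p = 0 := by rw [Category.assoc, w, comp_zero]
  obtain ⟨h', _, hu⟩ := hw (z₁ ≫ i) h0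
  exact (hu z₁ rfl).trans (hu z₂ e.symm).symm

end Helpers

/-- **Lemma 4.1** (the full 3×3 lemma).  In a weakly exact category satisfying
(4a) and (4b), given a commutative 3×3 diagram in which all three columns and
the first and third rows are short exact and the middle row is a complex
(`φ₁' ≫ φ₂' = 0`), the middle row is short exact. -/
theorem full_three_by_three {C : Type u} [Category.{v} C] [HasZeroMorphisms C]
    [HasZeroObject C] (D : MorphismProperty C) (hD : IsWeaklyExact D)
    (ax4a : ∀ ⦃X Y Z : C⦄ (p : X ⟶ Z) (q : Y ⟶ Z), D p → D q →
      ∃ (P : C) (fst : P ⟶ X) (snd : P ⟶ Y), IsPullback fst snd p q ∧ D snd)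
    (ax4b : ∀ ⦃A₁ A₂ A₃ B₁ B₂ : C⦄ (φ₂ : A₂ ⟶ A₃) (φ₂' : B₂ ⟶ A₃)
      (φ₁ : A₁ ⟶ A₂) (φ₁' : B₁ ⟶ B₂) (f₁ : A₁ ⟶ B₁) (f₂ : A₂ ⟶ B₂),
      D φ₂ → D φ₂' → IsKernelOf φ₁ φ₂ → IsKernelOf φ₁' φ₂' →
      f₂ ≫ φ₂' = φ₂ → φ₁ ≫ f₂ = f₁ ≫ φ₁' → (D f₁ ↔ D f₂))
    {A₁ A₂ A₃ B₁ B₂ B₃ C₁ C₂ C₃ : C}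
    (a₁ : A₁ ⟶ A₂) (a₂ : A₂ ⟶ A₃)
    (φ₁' : B₁ ⟶ B₂) (φ₂' : B₂ ⟶ B₃)
    (c₁ : C₁ ⟶ C₂) (c₂ : C₂ ⟶ C₃)
    (f₁ : A₁ ⟶ B₁) (f₂ : A₂ ⟶ B₂) (f₃ : A₃ ⟶ B₃)
    (g₁ : B₁ ⟶ C₁) (g₂ : B₂ ⟶ C₂) (g₃ : B₃ ⟶ C₃)
    (sq₁ : a₁ ≫ f₂ = f₁ ≫ φ₁') (sq₂ : a₂ ≫ f₃ = f₂ ≫ φ₂')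
    (sq₃ : φ₁' ≫ g₂ = g₁ ≫ c₁) (sq₄ : φ₂' ≫ g₃ = g₂ ≫ c₂)
    (hcol₁ : IsShortExact D f₁ g₁) (hcol₂ : IsShortExact D f₂ g₂)
    (hcol₃ : IsShortExact D f₃ g₃)
    (hrow₁ : IsShortExact D a₁ a₂) (hrow₃ : IsShortExact D c₁ c₂)
    (hcomplex : φ₁' ≫ φ₂' = 0) :
    IsShortExact D φ₁' φ₂' := by
  -- Step 1: `φ₂'` is a deflation.
  obtain ⟨P, pb₁, pb₂, hPB, hDpb₂⟩ := ax4a g₃ c₂ hcol₃.1 hrow₃.1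
  obtain ⟨P', pb₁', pb₂', hPB', hDpb₂'⟩ := ax4a c₂ g₃ hrow₃.1 hcol₃.1
  have hDpb₁ : D pb₁ := by
    set e : P ⟶ P' := hPB'.lift pb₂ pb₁ hPB.w.symm with he
    have e1 : e ≫ pb₁' = pb₂ := hPB'.lift_fst _ _ _
    have e2 : e ≫ pb₂' = pb₁ := hPB'.lift_snd _ _ _
    set e' : P' ⟶ P := hPB.lift pb₂' pb₁' hPB'.w.symm with he'
    have e3 : e' ≫ pb₁ = pb₂' := hPB.lift_fst _ _ _
    have e4 : e' ≫ pb₂ = pb₁' := hPB.lift_snd _ _ _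
    have hee : e ≫ e' = 𝟙 P :=
      hPB.hom_ext (by simp [e2, e3]) (by simp [e1, e4])
    have hee' : e' ≫ e = 𝟙 P' :=
      hPB'.hom_ext (by simp [e1, e4]) (by simp [e2, e3])
    have hiso : IsIso e := ⟨e', hee, hee'⟩
    rw [← e2]
    exact hD.defl_comp _ _ (hD.defl_of_isIso _ hiso) hDpb₂'
  set u : B₂ ⟶ P := hPB.lift φ₂' g₂ sq₄ with hu_def
  have hu1 : u ≫ pb₁ = φ₂' := hPB.lift_fst _ _ _
  have hu2 : u ≫ pb₂ = g₂ := hPB.lift_snd _ _ _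
  set k : A₃ ⟶ P := hPB.lift f₃ 0 (by rw [hcol₃.2.1, zero_comp]) with hk_def
  have hk1 : k ≫ pb₁ = f₃ := hPB.lift_fst _ _ _
  have hk2 : k ≫ pb₂ = 0 := hPB.lift_snd _ _ _
  have kker : IsKernelOf k pb₂ := by
    refine ⟨hk2, ?_⟩
    intro W w hw
    have h1 : (w ≫ pb₁) ≫ g₃ = 0 := by
      rw [Category.assoc, hPB.w, ← Category.assoc, hw, zero_comp]
    obtain ⟨h, hh, hhu⟩ := hcol₃.2.2 (w ≫ pb₁) h1
    refine ⟨h, hPB.hom_ext ?_ ?_, ?_⟩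
    · rw [Category.assoc, hk1, hh]
    · rw [Category.assoc, hk2, comp_zero, hw]
    · intro y hy
      exact hhu y (by rw [← hy, Category.assoc, hk1])
  have hDu : D u := by
    have hcomm : f₂ ≫ u = a₂ ≫ k := by
      apply hPB.hom_ext
      · rw [Category.assoc, Category.assoc, hu1, hk1, sq₂]
      · rw [Category.assoc, Category.assoc, hu2, hk2, comp_zero, hcol₂.2.1]
    exact (ax4b g₂ pb₂ f₂ k a₂ u hcol₂.1 hDpb₂ hcol₂.2 kker hu2 hcomm).mp hrow₁.1
  have hDφ₂' : D φ₂' := by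
    rw [← hu1]; exact hD.defl_comp _ _ hDu hDpb₁
  -- Step 2: set up the kernel of `φ₂'`.
  obtain ⟨K, j, jker, jcoker⟩ := hD.defl_kernel φ₂' hDφ₂'
  obtain ⟨v, hv, hvu⟩ := jker.2 (a₁ ≫ f₂) (by
    rw [Category.assoc, ← sq₂, ← Category.assoc, hrow₁.2.1, zero_comp])
  obtain ⟨s, hs, hsu⟩ := hrow₃.2.2 (j ≫ g₂) (by
    rw [Category.assoc, ← sq₄, ← Category.assoc, jker.1, zero_comp])
  -- `A₁ ⟶ K ⟶ C₁` is short exact, by axiom (4) applied to the transposed diagram.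
  have hvs : IsShortExact D v s :=
    hD.three_by_three v s f₂ g₂ f₃ g₃ a₁ j c₁ a₂ φ₂' c₂
      hv hs sq₂.symm sq₄.symm hrow₁ ⟨hDφ₂', jker⟩ hrow₃ hcol₂ hcol₃
  -- The comparison map `t : B₁ ⟶ K`.
  obtain ⟨t, ht, htu⟩ := jker.2 φ₁' hcomplex
  have hft : f₁ ≫ t = v := by
    apply jker.mono
    rw [Category.assoc, ht, hv, sq₁]
  have hts : t ≫ s = g₁ := by
    apply hrow₃.2.mono
    rw [Category.assoc, hs, ← Category.assoc, ht, sq₃]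
  have hDt : D t :=
    (ax4b g₁ s f₁ v (𝟙 A₁) t hcol₁.1 hvs.1 hcol₁.2 hvs.2 hts
      (by rw [Category.id_comp, hft])).mp (hD.defl_of_isIso _ inferInstance)
  -- `t` is an isomorphism.
  obtain ⟨K₀, i₀, i₀ker, tcoker⟩ := hD.defl_kernel t hDt
  have hi₀ : i₀ = 0 := by
    have h1 : i₀ ≫ g₁ = 0 := by
      rw [← hts, ← Category.assoc, i₀ker.1, zero_comp]
    obtain ⟨z, hz, _⟩ := hcol₁.2.2 i₀ h1
    have hz0 : z ≫ v = 0 := by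
      rw [← hft, ← Category.assoc, hz, i₀ker.1]
    have hz' : z = 0 := hvs.2.mono (by rw [hz0, zero_comp])
    rw [← hz, hz', zero_comp]
  obtain ⟨h, hh, _⟩ := tcoker.2 (𝟙 B₁) (by rw [hi₀, zero_comp])
  have hht : h ≫ t = 𝟙 K := by
    obtain ⟨y, hy, hyu⟩ := tcoker.2 t i₀ker.1
    have e1 : h ≫ t = y := hyu (h ≫ t)
      (by show t ≫ h ≫ t = t; rw [← Category.assoc, hh, Category.id_comp])
    have e2 : 𝟙 K = y := hyu (𝟙 K) (Category.comp_id t)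
    rw [e1, ← e2]
  haveI : IsIso t := ⟨h, hh, hht⟩
  -- Conclusion: transfer the kernel property along the isomorphism `t`.
  refine ⟨hDφ₂', hcomplex, ?_⟩
  intro W w hw
  obtain ⟨h', hh', hu'⟩ := jker.2 w hw
  refine ⟨h' ≫ inv t, ?_, ?_⟩
  · show (h' ≫ inv t) ≫ φ₁' = w
    rw [← ht]
    simp [hh']
  · intro y hy
    have hyt : y ≫ t = h' := hu' (y ≫ t)
      (by show (y ≫ t) ≫ j = w; rw [Category.assoc, ht, hy])
    rw [← hyt, Category.assoc, IsIso.hom_inv_id, Category.comp_id]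
end

section
/- In a weakly exact category, let A →^f B →^g C be a chain complex (g∘f = 0) with f an inflation and g a deflation. Let A →^f B →^{g'} C' be a short exact sequence, so g factors as B →^{g'} C' → C with C' → C a deflation, and let H be the kernel of C' → C. Let A' →^{f'} B →^g C be a short exact sequence, so f factors as A → A' →^{f'} B with A → A' an inflation, and let H' be the cokernel of A → A'. Then there is a natural morphism H → H' that is both a deflation and an inflation, and hence an isomorphism. Furthermore, the complex A → B → C is exact if and only if H = 0. -/
open CategoryTheory CategoryTheory.Limits

universe v u

section Aux

open ZeroObject

variable {C : Type u} [Category.{v} C] [HasZeroMorphisms C] {D : MorphismProperty C}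

lemma IsKernelOf.mono' {K A B : C} {i : K ⟶ A} {p : A ⟶ B} (hk : IsKernelOf i p) :
    Mono i := by
  constructor
  intro W a b hab
  obtain ⟨c, hc, huniq⟩ := hk.2 (a ≫ i) (by rw [Category.assoc, hk.1, comp_zero])
  exact (huniq a rfl).trans (huniq b hab.symm).symm

lemma IsCokernelOf.epi' {A B Q : C} {q : B ⟶ Q} {i : A ⟶ B} (hc : IsCokernelOf q i) :
    Epi q := by
  constructor
  intro W a b hab
  obtain ⟨c, hc', huniq⟩ := hc.2 (q ≫ a) (by rw [← Category.assoc, hc.1, zero_comp])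
  exact (huniq a rfl).trans (huniq b hab.symm).symm

/-- A deflation is a cokernel of any of its kernels. -/
lemma defl_cokernel (hD : IsWeaklyExact D) {X Q A : C} {p : X ⟶ Q} (hp : D p)
    {v : A ⟶ X} (hk : IsKernelOf v p) : IsCokernelOf p v := by
  obtain ⟨K, i, hker, hcoker⟩ := hD.defl_kernel p hp
  refine ⟨hk.1, fun W g hg => ?_⟩
  obtain ⟨e, he, -⟩ := hk.2 i hker.1
  exact hcoker.2 g (by rw [← he, Category.assoc, hg, comp_zero])

lemma defl_epi (hD : IsWeaklyExact D) {X Q : C} {p : X ⟶ Q} (hp : D p) : Epi p := by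
  obtain ⟨K, i, hker, hcoker⟩ := hD.defl_kernel p hp
  exact hcoker.epi'

/-- Two cokernels of the same morphism are related by a canonical isomorphism. -/
lemma cokernels_comparison {A X H H' : C} {v : A ⟶ X} {w : X ⟶ H} {q : X ⟶ H'}
    (hw : IsCokernelOf w v) (hq : IsCokernelOf q v) :
    ∃ θ : H ⟶ H', w ≫ θ = q ∧ IsIso θ := by
  obtain ⟨θ, hθ, -⟩ := hw.2 q hq.1
  obtain ⟨φ, hφ, -⟩ := hq.2 w hw.1
  refine ⟨θ, hθ, ⟨φ, ?_, ?_⟩⟩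
  · obtain ⟨c, hc, huniq⟩ := hw.2 w hw.1
    exact (huniq (θ ≫ φ) (by show w ≫ θ ≫ φ = w; rw [← Category.assoc, hθ, hφ])).trans
      (huniq (𝟙 H) (by simp)).symm
  · obtain ⟨c, hc, huniq⟩ := hq.2 q hq.1
    exact (huniq (φ ≫ θ) (by show q ≫ φ ≫ θ = q; rw [← Category.assoc, hφ, hθ])).trans
      (huniq (𝟙 H') (by simp)).symm

lemma iso_isKernelOf_zero {X Y Z : C} (u : X ⟶ Y) (hu : IsIso u) :
    IsKernelOf u (0 : Y ⟶ Z) := by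
  refine ⟨comp_zero, fun W g _ => ⟨g ≫ inv u, by simp, fun y hy => by rw [← hy]; simp⟩⟩

lemma defl_iso_of_kernel_zero (hD : IsWeaklyExact D) {X Q K : C} {p : X ⟶ Q}
    (hp : D p) {i : K ⟶ X} (hk : IsKernelOf i p) (hi : i = 0) : IsIso p := by
  have hcok := defl_cokernel hD hp hk
  obtain ⟨s, hs, -⟩ := hcok.2 (𝟙 X) (by rw [hi, zero_comp])
  have hepi : Epi p := hcok.epi'
  exact ⟨s, hs, by rw [← cancel_epi p, ← Category.assoc, hs, Category.id_comp,
    Category.comp_id]⟩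

lemma defl_mono_iso (hD : IsWeaklyExact D) {X Q : C} {p : X ⟶ Q}
    (hp : D p) (hm : Mono p) : IsIso p := by
  obtain ⟨K, i, hker, -⟩ := hD.defl_kernel p hp
  exact defl_iso_of_kernel_zero hD hp hker
    ((cancel_mono p).1 (by rw [hker.1, zero_comp]))

variable [HasZeroObject C]

lemma ses_id_zero (hD : IsWeaklyExact D) (X : C) :
    IsShortExact D (𝟙 X) (0 : X ⟶ (0 : C)) := by
  refine ⟨hD.defl_to_zero _ (isZero_zero C), comp_zero,
    fun W g _ => ⟨g, by simp, fun y hy => by simpa using hy⟩⟩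

lemma ses_zero_id (hD : IsWeaklyExact D) (X : C) :
    IsShortExact D (0 : (0 : C) ⟶ X) (𝟙 X) := by
  refine ⟨hD.defl_of_isIso _ inferInstance, zero_comp, fun W g hg => ?_⟩
  refine ⟨0, by simp only [comp_zero]; exact (by simpa using hg : g = 0).symm,
    fun y hy => (isZero_zero C).eq_of_tgt y 0⟩

end Aux

section ExactThree

variable {C : Type u} [Category.{v} C] [HasZeroMorphisms C] (D : MorphismProperty C)

/-- Exactness (in the sense of Definition 1.1 of the paper, including the
conditions at both ends) of a three-term sequence `A ⟶ B ⟶ Q`. -/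
def ExactThree {A B Q : C} (f : A ⟶ B) (g : B ⟶ Q) : Prop :=
  ∃ (Z₁ Z₂ Z₃ Z₄ : C) (ι₁ : Z₁ ⟶ A) (π₁ : A ⟶ Z₂) (ι₂ : Z₂ ⟶ B) (π₂ : B ⟶ Z₃)
    (ι₃ : Z₃ ⟶ Q) (π₃ : Q ⟶ Z₄),
    f = π₁ ≫ ι₂ ∧ g = π₂ ≫ ι₃ ∧
    IsShortExact D ι₁ π₁ ∧ IsShortExact D ι₂ π₂ ∧ IsShortExact D ι₃ π₃

end ExactThree

open ZeroObject

/-- **Lemma 6.2.**  Let `A ⟶ B ⟶ Q` be a chain complex in a weakly exact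
category with `f` an inflation and `g` a deflation.  Let `H` be the cohomology
computed as the kernel of the induced deflation `C' ⟶ Q` (where
`A ⟶ B ⟶ C'` is short exact), and `H'` the cohomology computed as the
cokernel of the induced inflation `A ⟶ A'` (where `A' ⟶ B ⟶ Q` is short
exact).  Then there is a morphism `H ⟶ H'` that is both a deflation and an
inflation, hence an isomorphism; moreover `A ⟶ B ⟶ Q` is exact iff `H = 0`. -/
theorem cohomology_welldefined {C : Type u} [Category.{v} C]
    [HasZeroMorphisms C] [HasZeroObject C]
    (D : MorphismProperty C) (hD : IsWeaklyExact D)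
    {A B Q A' C' H H' : C}
    (f : A ⟶ B) (g : B ⟶ Q)
    (hf : IsInflation D f) (hg : D g) (hfg : f ≫ g = 0)
    (g' : B ⟶ C') (hses₁ : IsShortExact D f g')
    (u : C' ⟶ Q) (hu : g' ≫ u = g)
    (h : H ⟶ C') (hh : IsKernelOf h u)
    (f' : A' ⟶ B) (hses₂ : IsShortExact D f' g)
    (v : A ⟶ A') (hv : v ≫ f' = f)
    (q : A' ⟶ H') (hq : IsCokernelOf q v) :
    (∃ θ : H ⟶ H', D θ ∧ IsInflation D θ ∧ IsIso θ) ∧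
      (ExactThree D f g ↔ IsZero H) := by
  -- `u` is a deflation
  have hDg' : D g' := hses₁.1
  have hDu : D u := hD.defl_cancel g' u (hu ▸ hg) hDg'
  -- construct `w : A' ⟶ H` with `w ≫ h = f' ≫ g'`
  have hf'g' : (f' ≫ g') ≫ u = 0 := by rw [Category.assoc, hu, hses₂.2.1]
  obtain ⟨w, hw, -⟩ := hh.2 (f' ≫ g') hf'g'
  -- by the 3×3 lemma, `A ⟶ A' ⟶ H` is short exact
  have hses_vw : IsShortExact D v w := by
    refine hD.three_by_three v w f g' (0 : (0 : C) ⟶ Q) (𝟙 Q)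
      (𝟙 A) f' h (0 : A ⟶ (0 : C)) g u ?_ ?_ ?_ ?_
      (ses_id_zero hD A) hses₂ ⟨hDu, hh⟩ hses₁ (ses_zero_id hD Q)
    · rw [hv, Category.id_comp]
    · rw [hw]
    · rw [hfg, zero_comp]
    · rw [hu, Category.comp_id]
  -- `w` is a cokernel of `v`, hence compare with `q`
  have hcok_w : IsCokernelOf w v := defl_cokernel hD hses_vw.1 hses_vw.2
  obtain ⟨θ, hθ, hθiso⟩ := cokernels_comparison hcok_w hq
  constructor
  · exact ⟨θ, hD.defl_of_isIso θ hθiso,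
      ⟨0, 0, hD.defl_to_zero _ (isZero_zero C), iso_isKernelOf_zero θ hθiso⟩, hθiso⟩
  constructor
  · -- exactness implies `H = 0`
    rintro ⟨Z₁, Z₂, Z₃, Z₄, ι₁, π₁, ι₂, π₂, ι₃, π₃, hf1, hg1, hse₁, hse₂, hse₃⟩
    -- `π₁` is an iso
    have hfmono : Mono f := hses₁.2.mono'
    have hπ₁mono : Mono π₁ := by
      constructor
      intro W a b hab
      have : a ≫ f = b ≫ f := by rw [hf1, ← Category.assoc, ← Category.assoc, hab]
      exact (cancel_mono f).1 this
    have hπ₁iso : IsIso π₁ := defl_mono_iso hD hse₁.1 hπ₁mono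
    -- `f` is a kernel of `π₂`
    have hfker : IsKernelOf f π₂ := by
      refine ⟨by rw [hf1, Category.assoc, hse₂.2.1, comp_zero], fun W k hk => ?_⟩
      obtain ⟨e, he, huniq⟩ := hse₂.2.2 k hk
      refine ⟨e ≫ inv π₁, ?_, fun y hy => ?_⟩
      · show (e ≫ inv π₁) ≫ f = k
        rw [hf1, Category.assoc, IsIso.inv_hom_id_assoc, he]
      have hy' : y ≫ f = k := hy
      have : (y ≫ π₁) ≫ ι₂ = k := by rw [Category.assoc, ← hf1, hy']
      rw [← huniq (y ≫ π₁) this, Category.assoc, IsIso.hom_inv_id, Category.comp_id]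
    -- compare the two cokernels `g'` and `π₂` of `f`
    obtain ⟨ε, hε, hεiso⟩ := cokernels_comparison
      (defl_cokernel hD hDg' hses₁.2) (defl_cokernel hD hse₂.1 hfker)
    -- `u = ε ≫ ι₃`, hence `u` is mono
    have hg'epi : Epi g' := defl_epi hD hDg'
    have huεi : u = ε ≫ ι₃ := by
      refine (cancel_epi g').1 ?_
      rw [hu, ← Category.assoc, hε, ← hg1]
    have hι₃mono : Mono ι₃ := hse₃.2.mono'
    have hh0 : h = 0 := by
      have h1 : (h ≫ ε) ≫ ι₃ = 0 ≫ ι₃ := by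
        rw [Category.assoc, ← huεi, hh.1, zero_comp]
      have h2 : h ≫ ε = 0 := (cancel_mono ι₃).1 h1
      calc h = (h ≫ ε) ≫ inv ε := by rw [Category.assoc, IsIso.hom_inv_id,
              Category.comp_id]
        _ = 0 := by rw [h2, zero_comp]
    have hhmono : Mono h := hh.mono'
    rw [IsZero.iff_id_eq_zero]
    exact (cancel_mono h).1 (by rw [Category.id_comp, hh0, zero_comp])
  · -- `H = 0` implies exactness
    intro hH
    have hh0 : h = 0 := hH.eq_of_src h 0
    have huiso : IsIso u := defl_iso_of_kernel_zero hD hDu hh hh0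
    refine ⟨0, A, C', 0, 0, 𝟙 A, f, g', u, 0, by rw [Category.id_comp], hu.symm,
      ses_zero_id hD A, hses₁,
      hD.defl_to_zero _ (isZero_zero C), iso_isKernelOf_zero u huiso⟩
end
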